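/- arXiv:1004.1821 — 2 statements merged into one kernel-verified Lean document; each statement's English description precedes it below -/
import Mathlib

section
/- Let A be an n×N real matrix, I ⊆ {1,…,N} an index set, and L ≥ 0, U ≥ 0 such that (1−L)‖x‖₂² ≤ ‖Ax‖₂² ≤ (1+U)‖x‖₂² for every x ∈ ℝ^N supported in I. Then for every u ∈ ℝ^N supported in I, (1−L)‖u‖₂ ≤ ‖(A*(Au))_I‖₂ ≤ (1+U)‖u‖₂. -/
open Finset Matrix

noncomputable def euclNorm {α : Type*} [Fintype α] (v : α → ℝ) : ℝ :=
  Real.sqrt (∑ i, (v i) ^ 2)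

def restr {N : ℕ} (I : Finset (Fin N)) (x : Fin N → ℝ) : Fin N → ℝ :=
  fun i => if i ∈ I then x i else 0

def sparse {N : ℕ} (k : ℕ) (x : Fin N → ℝ) : Prop :=
  (Finset.univ.filter fun i => x i ≠ 0).card ≤ k

def aRIP {n N : ℕ} (A : Matrix (Fin n) (Fin N) ℝ) (m : ℕ) (L U : ℝ) : Prop :=
  ∀ x : Fin N → ℝ, sparse m x →
    (1 - L) * euclNorm x ^ 2 ≤ euclNorm (A.mulVec x) ^ 2 ∧
      euclNorm (A.mulVec x) ^ 2 ≤ (1 + U) * euclNorm x ^ 2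

def selects {N : ℕ} (T : Finset (Fin N)) (v : Fin N → ℝ) : Prop :=
  ∀ i ∈ T, ∀ j ∉ T, |v j| ≤ |v i|

def subCols {n N : ℕ} (A : Matrix (Fin n) (Fin N) ℝ) (I : Finset (Fin N)) :
    Matrix (Fin n) I ℝ :=
  fun r c => A r (c : Fin N)

noncomputable def gram {n N : ℕ} (A : Matrix (Fin n) (Fin N) ℝ) (I : Finset (Fin N)) :
    Matrix I I ℝ :=
  (subCols A I)ᵀ * subCols A I

noncomputable def pinvApply {n N : ℕ} (A : Matrix (Fin n) (Fin N) ℝ) (I : Finset (Fin N))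
    (y : Fin n → ℝ) : I → ℝ :=
  ((gram A I)⁻¹ * (subCols A I)ᵀ).mulVec y

noncomputable def pinvVec {n N : ℕ} (A : Matrix (Fin n) (Fin N) ℝ) (I : Finset (Fin N))
    (y : Fin n → ℝ) : Fin N → ℝ :=
  fun i => if h : i ∈ I then pinvApply A I y ⟨i, h⟩ else 0

/-! Write `v = (A*(Au))_I`. Since `u` and `v` are supported in `I`, restricting to `I` is invisible
against them, so `⟨u, v⟩ = ‖Au‖²` and `‖v‖² = ⟨Av, Au⟩`. Cauchy–Schwarz then gives
`(1 - L)‖u‖² ≤ ‖u‖‖v‖` and `‖v‖² ≤ ‖Av‖‖Au‖ ≤ (1 + U)‖v‖‖u‖`; cancel `‖u‖`, resp. `‖v‖`. -/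

section EuclNorm

variable {α : Type*} [Fintype α]

lemma euclNorm_nonneg (v : α → ℝ) : 0 ≤ euclNorm v :=
  Real.sqrt_nonneg _

lemma euclNorm_sq (v : α → ℝ) : euclNorm v ^ 2 = v ⬝ᵥ v := by
  rw [euclNorm, Real.sq_sqrt (Finset.sum_nonneg fun _ _ => sq_nonneg _)]
  simp only [dotProduct, sq]

lemma dotProduct_le_euclNorm_mul_euclNorm (v w : α → ℝ) :
    v ⬝ᵥ w ≤ euclNorm v * euclNorm w :=
  Real.sum_mul_le_sqrt_mul_sqrt _ _ _

end EuclNorm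

section Restr

variable {N : ℕ} {I : Finset (Fin N)}

lemma restr_apply_of_notMem (x : Fin N → ℝ) {i : Fin N} (hi : i ∉ I) : restr I x i = 0 :=
  if_neg hi

lemma dotProduct_restr_of_supported {x : Fin N → ℝ} (hx : ∀ i ∉ I, x i = 0) (y : Fin N → ℝ) :
    x ⬝ᵥ restr I y = x ⬝ᵥ y := by
  refine Finset.sum_congr rfl fun i _ => ?_
  by_cases hi : i ∈ I
  · simp only [restr, if_pos hi]
  · simp only [hx i hi, zero_mul]

end Restr

section RestrictedGram

variable {n N : ℕ} (A : Matrix (Fin n) (Fin N) ℝ) {I : Finset (Fin N)}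

lemma dotProduct_restr_transpose_mulVec {x : Fin N → ℝ} (hx : ∀ i ∉ I, x i = 0)
    (y : Fin n → ℝ) : x ⬝ᵥ restr I (Aᵀ *ᵥ y) = A *ᵥ x ⬝ᵥ y := by
  rw [dotProduct_restr_of_supported hx, dotProduct_transpose_mulVec, dotProduct_comm]

lemma mul_euclNorm_le_euclNorm_restr_gram {c : ℝ}
    (hA : ∀ x : Fin N → ℝ, (∀ i ∉ I, x i = 0) → c * euclNorm x ^ 2 ≤ euclNorm (A *ᵥ x) ^ 2)
    {u : Fin N → ℝ} (hu : ∀ i ∉ I, u i = 0) :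
    c * euclNorm u ≤ euclNorm (restr I (Aᵀ *ᵥ (A *ᵥ u))) := by
  set v := restr I (Aᵀ *ᵥ (A *ᵥ u))
  have key : euclNorm u * (c * euclNorm u) ≤ euclNorm u * euclNorm v :=
    calc euclNorm u * (c * euclNorm u) = c * euclNorm u ^ 2 := by ring
      _ ≤ euclNorm (A *ᵥ u) ^ 2 := hA u hu
      _ = u ⬝ᵥ v := by rw [euclNorm_sq, dotProduct_restr_transpose_mulVec A hu]
      _ ≤ euclNorm u * euclNorm v := dotProduct_le_euclNorm_mul_euclNorm u v
  rcases (euclNorm_nonneg u).eq_or_lt with hu0 | hu0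
  · rw [← hu0, mul_zero]
    exact euclNorm_nonneg v
  · exact le_of_mul_le_mul_left key hu0

lemma euclNorm_restr_gram_le_mul_euclNorm {c : ℝ} (hc : 0 ≤ c)
    (hA : ∀ x : Fin N → ℝ, (∀ i ∉ I, x i = 0) → euclNorm (A *ᵥ x) ^ 2 ≤ c * euclNorm x ^ 2)
    {u : Fin N → ℝ} (hu : ∀ i ∉ I, u i = 0) :
    euclNorm (restr I (Aᵀ *ᵥ (A *ᵥ u))) ≤ c * euclNorm u := by
  set v := restr I (Aᵀ *ᵥ (A *ᵥ u))
  have hv : ∀ i ∉ I, v i = 0 := fun i hi => restr_apply_of_notMem _ hi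
  have hAvAu : euclNorm (A *ᵥ v) * euclNorm (A *ᵥ u) ≤ euclNorm v * (c * euclNorm u) := by
    rw [← pow_le_pow_iff_left₀ (by positivity [euclNorm_nonneg (A *ᵥ v), euclNorm_nonneg (A *ᵥ u)])
      (by positivity [euclNorm_nonneg v, euclNorm_nonneg u]) two_ne_zero, mul_pow, mul_pow, mul_pow]
    calc euclNorm (A *ᵥ v) ^ 2 * euclNorm (A *ᵥ u) ^ 2
        ≤ (c * euclNorm v ^ 2) * (c * euclNorm u ^ 2) :=
          mul_le_mul (hA v hv) (hA u hu) (sq_nonneg _) (by positivity)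
      _ = euclNorm v ^ 2 * (c ^ 2 * euclNorm u ^ 2) := by ring
  have key : euclNorm v * euclNorm v ≤ euclNorm v * (c * euclNorm u) :=
    calc euclNorm v * euclNorm v = A *ᵥ v ⬝ᵥ A *ᵥ u := by
          rw [← sq, euclNorm_sq, dotProduct_restr_transpose_mulVec A hv]
      _ ≤ euclNorm (A *ᵥ v) * euclNorm (A *ᵥ u) := dotProduct_le_euclNorm_mul_euclNorm _ _
      _ ≤ euclNorm v * (c * euclNorm u) := hAvAu
  rcases (euclNorm_nonneg v).eq_or_lt with hv0 | hv0
  · rw [← hv0]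
    exact mul_nonneg hc (euclNorm_nonneg u)
  · exact le_of_mul_le_mul_left key hv0

end RestrictedGram

theorem stmt1_general {n N : ℕ} (A : Matrix (Fin n) (Fin N) ℝ) (I : Finset (Fin N))
    (L U : ℝ) (hU : 0 ≤ U)
    (hA : ∀ x : Fin N → ℝ, (∀ i ∉ I, x i = 0) →
      (1 - L) * euclNorm x ^ 2 ≤ euclNorm (A.mulVec x) ^ 2 ∧
        euclNorm (A.mulVec x) ^ 2 ≤ (1 + U) * euclNorm x ^ 2) :
    ∀ u : Fin N → ℝ, (∀ i ∉ I, u i = 0) →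
      (1 - L) * euclNorm u ≤ euclNorm (restr I (Aᵀ.mulVec (A.mulVec u))) ∧
        euclNorm (restr I (Aᵀ.mulVec (A.mulVec u))) ≤ (1 + U) * euclNorm u :=
  fun _ hu =>
    ⟨mul_euclNorm_le_euclNorm_restr_gram A (fun x hx => (hA x hx).1) hu,
      euclNorm_restr_gram_le_mul_euclNorm A (by linarith) (fun x hx => (hA x hx).2) hu⟩

theorem stmt1 {n N : ℕ} (A : Matrix (Fin n) (Fin N) ℝ) (I : Finset (Fin N))
    (L U : ℝ) (hL : 0 ≤ L) (hU : 0 ≤ U)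
    (hA : ∀ x : Fin N → ℝ, (∀ i ∉ I, x i = 0) →
      (1 - L) * euclNorm x ^ 2 ≤ euclNorm (A.mulVec x) ^ 2 ∧
        euclNorm (A.mulVec x) ^ 2 ≤ (1 + U) * euclNorm x ^ 2) :
    ∀ u : Fin N → ℝ, (∀ i ∉ I, u i = 0) →
      (1 - L) * euclNorm u ≤ euclNorm (restr I (Aᵀ.mulVec (A.mulVec u))) ∧
        euclNorm (restr I (Aᵀ.mulVec (A.mulVec u))) ≤ (1 + U) * euclNorm u :=
  stmt1_general A I L U hU hA
end

section
/- Let A be an n×N real matrix, I ⊆ {1,…,N} an index set, and L ∈ [0,1) such that (1−L)‖x‖₂² ≤ ‖Ax‖₂² for every x ∈ ℝ^N supported in I. Then the matrix A_I*A_I is invertible and for every y ∈ ℝⁿ one has ‖A_I† y‖₂ ≤ (1−L)^{−1/2}·‖y‖₂, where A_I† := (A_I*A_I)⁻¹A_I*. -/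
open Finset Matrix

/-!
For `B := A_I`, the hypothesis says `(1 - L)‖z‖² ≤ ‖Bz‖²` for all `z`. Hence `B` is injective and
`BᵀB` is positive definite. If `c = (BᵀB)⁻¹Bᵀy`, then `Bc` is the orthogonal projection of `y` onto
the range of `B`, so `(1 - L)‖c‖² ≤ ‖Bc‖² ≤ ‖y‖²`.
-/

section DotProduct

variable {m k : Type*} [Fintype m] [Fintype k]

lemma euclNorm_eq_sqrt_dotProduct (v : m → ℝ) : euclNorm v = √(v ⬝ᵥ v) := by
  simp [euclNorm, dotProduct, sq]

lemma dotProduct_self_nonneg (v : m → ℝ) : 0 ≤ v ⬝ᵥ v :=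
  sum_nonneg fun i _ => mul_self_nonneg (v i)

lemma dotProduct_sq_le_dotProduct_self_mul (v w : m → ℝ) :
    (v ⬝ᵥ w) ^ 2 ≤ (v ⬝ᵥ v) * (w ⬝ᵥ w) := by
  simpa [dotProduct, sq] using sum_mul_sq_le_sq_mul_sq univ v w

lemma dotProduct_transpose_mul_self_mulVec (B : Matrix m k ℝ) (z : k → ℝ) :
    z ⬝ᵥ (Bᵀ * B) *ᵥ z = B *ᵥ z ⬝ᵥ B *ᵥ z := by
  rw [← mulVec_mulVec, dotProduct_mulVec, vecMul_transpose]

variable {c : ℝ} {B : Matrix m k ℝ}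

lemma posDef_transpose_mul_self_of_lowerBound (hc : 0 < c)
    (hB : ∀ z, c * (z ⬝ᵥ z) ≤ B *ᵥ z ⬝ᵥ B *ᵥ z) : (Bᵀ * B).PosDef := by
  have hinj : Function.Injective B.mulVec := by
    intro u v huv
    have hdiff := hB (u - v)
    rw [mulVec_sub, huv, sub_self, dotProduct_zero] at hdiff
    have : (u - v) ⬝ᵥ (u - v) = 0 :=
      le_antisymm (nonpos_of_mul_nonpos_right hdiff hc) (dotProduct_self_nonneg _)
    exact sub_eq_zero.mp (dotProduct_self_eq_zero.mp this)
  simpa [conjTranspose_eq_transpose_of_trivial] using PosDef.conjTranspose_mul_self B hinj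

lemma dotProduct_self_mulVec_pinv_le [DecidableEq k] (hG : IsUnit (Bᵀ * B)) (y : m → ℝ) :
    B *ᵥ ((Bᵀ * B)⁻¹ * Bᵀ) *ᵥ y ⬝ᵥ B *ᵥ ((Bᵀ * B)⁻¹ * Bᵀ) *ᵥ y ≤ y ⬝ᵥ y := by
  set p := ((Bᵀ * B)⁻¹ * Bᵀ) *ᵥ y
  have hGp : (Bᵀ * B) *ᵥ p = Bᵀ *ᵥ y := by
    rw [mulVec_mulVec, ← Matrix.mul_assoc,
      mul_nonsing_inv _ ((isUnit_iff_isUnit_det _).mp hG), Matrix.one_mul]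
  -- `Bp` is the projection of `y`: `⟪Bp, Bp⟫ = ⟪p, BᵀBp⟫ = ⟪p, Bᵀy⟫ = ⟪Bp, y⟫`.
  have hproj : B *ᵥ p ⬝ᵥ B *ᵥ p = B *ᵥ p ⬝ᵥ y := by
    rw [← dotProduct_transpose_mul_self_mulVec, hGp, dotProduct_mulVec, vecMul_transpose]
  have hcs := dotProduct_sq_le_dotProduct_self_mul (B *ᵥ p) y
  rw [← hproj] at hcs
  nlinarith [dotProduct_self_nonneg (B *ᵥ p), dotProduct_self_nonneg y]

lemma euclNorm_pinv_mulVec_le [DecidableEq k] (hc : 0 < c)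
    (hB : ∀ z, c * (z ⬝ᵥ z) ≤ B *ᵥ z ⬝ᵥ B *ᵥ z) (y : m → ℝ) :
    euclNorm (((Bᵀ * B)⁻¹ * Bᵀ) *ᵥ y) ≤ (√c)⁻¹ * euclNorm y := by
  have hG := (posDef_transpose_mul_self_of_lowerBound hc hB).isUnit
  have hle := (hB _).trans (dotProduct_self_mulVec_pinv_le hG y)
  rw [euclNorm_eq_sqrt_dotProduct, euclNorm_eq_sqrt_dotProduct, ← Real.sqrt_inv,
    ← Real.sqrt_mul (inv_nonneg.mpr hc.le)]
  exact Real.sqrt_le_sqrt ((le_inv_mul_iff₀ hc).mpr hle)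

end DotProduct

def zeroExtend {α : Type*} [DecidableEq α] (I : Finset α) (z : I → ℝ) : α → ℝ :=
  fun i => if h : i ∈ I then z ⟨i, h⟩ else 0

lemma dotProduct_zeroExtend {α : Type*} [Fintype α] [DecidableEq α] (I : Finset α)
    (w : α → ℝ) (z : I → ℝ) : w ⬝ᵥ zeroExtend I z = ∑ i : I, w i * z i := by
  rw [dotProduct, ← sum_subset (subset_univ I) (fun i _ hi => by simp [zeroExtend, hi]),
    ← sum_coe_sort I]
  exact sum_congr rfl fun i _ => by simp [zeroExtend, i.2]

lemma zeroExtend_dotProduct_self {α : Type*} [Fintype α] [DecidableEq α] (I : Finset α)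
    (z : I → ℝ) : zeroExtend I z ⬝ᵥ zeroExtend I z = z ⬝ᵥ z := by
  rw [dotProduct_zeroExtend]
  exact sum_congr rfl fun i _ => by simp [zeroExtend, i.2]

lemma mulVec_zeroExtend {n N : ℕ} (A : Matrix (Fin n) (Fin N) ℝ) (I : Finset (Fin N))
    (z : I → ℝ) : A *ᵥ zeroExtend I z = subCols A I *ᵥ z := by
  ext r
  exact dotProduct_zeroExtend I (A r) z

lemma subCols_lowerBound {n N : ℕ} (A : Matrix (Fin n) (Fin N) ℝ) (I : Finset (Fin N)) (L : ℝ)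
    (hA : ∀ x : Fin N → ℝ, (∀ i ∉ I, x i = 0) →
      (1 - L) * euclNorm x ^ 2 ≤ euclNorm (A.mulVec x) ^ 2) (z : I → ℝ) :
    (1 - L) * (z ⬝ᵥ z) ≤ subCols A I *ᵥ z ⬝ᵥ subCols A I *ᵥ z := by
  have hx := hA (zeroExtend I z) fun i hi => by simp [zeroExtend, hi]
  simp only [euclNorm_eq_sqrt_dotProduct, Real.sq_sqrt (dotProduct_self_nonneg _),
    zeroExtend_dotProduct_self, mulVec_zeroExtend] at hx
  exact hx

theorem stmt2_general {n N : ℕ} (A : Matrix (Fin n) (Fin N) ℝ) (I : Finset (Fin N))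
    (L : ℝ) (hL1 : L < 1)
    (hA : ∀ x : Fin N → ℝ, (∀ i ∉ I, x i = 0) →
      (1 - L) * euclNorm x ^ 2 ≤ euclNorm (A.mulVec x) ^ 2) :
    IsUnit (gram A I) ∧
      ∀ y : Fin n → ℝ, euclNorm (pinvApply A I y) ≤ (Real.sqrt (1 - L))⁻¹ * euclNorm y := by
  have hL : 0 < 1 - L := sub_pos.mpr hL1
  have hB := subCols_lowerBound A I L hA
  exact ⟨(posDef_transpose_mul_self_of_lowerBound hL hB).isUnit, euclNorm_pinv_mulVec_le hL hB⟩

theorem stmt2 {n N : ℕ} (A : Matrix (Fin n) (Fin N) ℝ) (I : Finset (Fin N))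
    (L : ℝ) (hL0 : 0 ≤ L) (hL1 : L < 1)
    (hA : ∀ x : Fin N → ℝ, (∀ i ∉ I, x i = 0) →
      (1 - L) * euclNorm x ^ 2 ≤ euclNorm (A.mulVec x) ^ 2) :
    IsUnit (gram A I) ∧
      ∀ y : Fin n → ℝ, euclNorm (pinvApply A I y) ≤ (Real.sqrt (1 - L))⁻¹ * euclNorm y :=
  stmt2_general A I L hL1 hA
end
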